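/- arXiv:2604.20433 — 2 statements merged into one kernel-verified Lean document; each statement's English description precedes it below -/
import Mathlib

section
/- Let R_0 ∈ ℝ^m, let (Δ_t)_{t∈ℕ} be any sequence in ℝ^n, and define R_{t+1} := R_t + BΔ_t. Let R̄ be the unique normal reward in the ℓ-orbit of R_0. Then for every t, R_{t+1} − R̄ = −B(V*_{R_0} − ∑_{τ=0}^{t} Δ_τ); consequently R_t converges to R̄ as t → ∞ if and only if the partial sums ∑_{τ=0}^{t} Δ_τ converge to V*_{R_0} as t → ∞. -/
open Matrix MeasureTheory Filter Topology

noncomputable section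

/-- The policy matrix `Π` of a deterministic policy `π`. -/
def polMat {n m : ℕ} (π : Fin n → Fin m) : Matrix (Fin n) (Fin m) ℝ :=
  Matrix.of fun i j => if j = π i then 1 else 0

/-- The matrix `S` with `S^j_i = 1` iff `s j = i`. -/
def projMat {n m : ℕ} (s : Fin m → Fin n) : Matrix (Fin m) (Fin n) ℝ :=
  Matrix.of fun j i => if s j = i then 1 else 0

/-- A row-stochastic matrix: nonnegative entries, rows summing to one. -/
def RowStochastic {n m : ℕ} (F : Matrix (Fin m) (Fin n) ℝ) : Prop :=
  (∀ j i, 0 ≤ F j i) ∧ ∀ j, ∑ i, F j i = 1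

/-- A deterministic policy: a section of the state projection `s`. -/
def IsPolicy {n m : ℕ} (s : Fin m → Fin n) (π : Fin n → Fin m) : Prop :=
  ∀ i, s (π i) = i

/-- The value vector `V_{π,R} = (I − γΠF)⁻¹ Π R`. -/
def valueVec {n m : ℕ} (γ : ℝ) (F : Matrix (Fin m) (Fin n) ℝ)
    (π : Fin n → Fin m) (R : Fin m → ℝ) : Fin n → ℝ :=
  ((1 : Matrix (Fin n) (Fin n) ℝ) - γ • (polMat π * F))⁻¹ *ᵥ (polMat π *ᵥ R)

/-- A policy is optimal for `R` when its value vector dominates all others componentwise. -/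
def IsOptimal {n m : ℕ} (s : Fin m → Fin n) (γ : ℝ) (F : Matrix (Fin m) (Fin n) ℝ)
    (R : Fin m → ℝ) (π : Fin n → Fin m) : Prop :=
  IsPolicy s π ∧ ∀ π', IsPolicy s π' → ∀ i, valueVec γ F π' R i ≤ valueVec γ F π R i

/-- `hmax R i = max_{j ∈ U_i} R j`. -/
def hmax {n m : ℕ} (s : Fin m → Fin n) (R : Fin m → ℝ) (i : Fin n) : ℝ :=
  sSup {x | ∃ j, s j = i ∧ R j = x}


/-- A reward is normal when its optimal value vector is zero. -/
def IsNormal {n m : ℕ} (s : Fin m → Fin n) (γ : ℝ) (F : Matrix (Fin m) (Fin n) ℝ)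
    (R : Fin m → ℝ) : Prop :=
  ∃ π, IsOptimal s γ F R π ∧ valueVec γ F π R = 0

/-!
Adding `BΔ` to a reward shifts the value vector of every policy by exactly `-Δ`, because
`ΠB = -(I - γΠF)`. Hence optimal policies are invariant along an ℓ-orbit, and the normal reward
of the orbit of `R₀` is `R₀ + B V*_{R₀}`. The iterates are `R_{t+1} = R₀ + B ∑_{τ≤t} Δ_τ`, which
gives the error formula. Finally `I - γΠF` is strictly diagonally dominant because `γ < 1`, so
`ΠB` is invertible and `B` injective; thus `x ↦ R₀ + Bx` is a topological embedding, and `R_t`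
converges to `R₀ + B V*_{R₀}` exactly when the partial sums converge to `V*_{R₀}`.
-/

open Finset

section Matrix

variable {ι κ : Type*} [Fintype κ]

theorem eq_add_mulVec_sum_range (M : Matrix ι κ ℝ) {x : ℕ → ι → ℝ} {d : ℕ → κ → ℝ}
    (hstep : ∀ t, x (t + 1) = x t + M *ᵥ d t) (t : ℕ) :
    x t = x 0 + M *ᵥ ∑ τ ∈ range t, d τ := by
  induction t with
  | zero => simp
  | succ t ih => rw [hstep, ih, sum_range_succ, mulVec_add, add_assoc]

theorem tendsto_const_add_mulVec_iff {α : Type*} {M : Matrix ι κ ℝ}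
    (hM : Function.Injective M.mulVec) (c : ι → ℝ) {x : α → κ → ℝ} {l : Filter α}
    {a : κ → ℝ} :
    Tendsto (fun t => c + M *ᵥ x t) l (𝓝 (c + M *ᵥ a)) ↔ Tendsto x l (𝓝 a) :=
  ((Homeomorph.addLeft c).isEmbedding.comp
    (LinearMap.isClosedEmbedding_of_injective (f := M.mulVecLin)
      (LinearMap.ker_eq_bot.mpr hM)).isEmbedding).tendsto_nhds_iff.symm

end Matrix

variable {n m : ℕ}

theorem polMat_mul_apply (π : Fin n → Fin m) (F : Matrix (Fin m) (Fin n) ℝ) (i : Fin n)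
    (k : Fin n) : (polMat π * F) i k = F (π i) k := by
  simp [mul_apply, polMat]

theorem RowStochastic.polMat_mul {F : Matrix (Fin m) (Fin n) ℝ} (hF : RowStochastic F)
    (π : Fin n → Fin m) : RowStochastic (polMat π * F) := by
  simp only [RowStochastic, polMat_mul_apply]
  exact ⟨fun i => hF.1 (π i), fun i => hF.2 (π i)⟩

theorem RowStochastic.det_one_sub_smul_ne_zero {M : Matrix (Fin n) (Fin n) ℝ}
    (hM : RowStochastic M) {γ : ℝ} (hγ0 : 0 ≤ γ) (hγ1 : γ < 1) : (1 - γ • M).det ≠ 0 := by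
  refine det_ne_zero_of_sum_row_lt_diag fun k => ?_
  have hoff : ∀ j ∈ univ.erase k, ‖(1 - γ • M) k j‖ = γ * M k j := fun j hj => by
    simp [one_apply_ne' (ne_of_mem_erase hj), abs_of_nonneg hγ0, abs_of_nonneg (hM.1 k j)]
  have hkk : M k k ≤ 1 := hM.2 k ▸ single_le_sum (fun j _ => hM.1 k j) (mem_univ k)
  have hdiag : ‖(1 - γ • M) k k‖ = 1 - γ * M k k := by
    rw [Matrix.sub_apply, Matrix.smul_apply, one_apply_eq, smul_eq_mul, Real.norm_eq_abs,
      abs_of_nonneg (by nlinarith)]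
  rw [sum_congr rfl hoff, ← mul_sum, sum_erase_eq_sub (mem_univ k), hM.2 k, hdiag]
  linarith

theorem polMat_mul_projMat {s : Fin m → Fin n} {π : Fin n → Fin m} (hπ : IsPolicy s π) :
    polMat π * projMat s = 1 := by
  ext i i'
  simp only [mul_apply, polMat, projMat, of_apply, ite_mul, one_mul, zero_mul, sum_ite_eq',
    mem_univ, if_true, hπ i, one_apply]

theorem polMat_mul_sub_projMat {s : Fin m → Fin n} {π : Fin n → Fin m} (hπ : IsPolicy s π)
    (γ : ℝ) (F : Matrix (Fin m) (Fin n) ℝ) :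
    polMat π * (γ • F - projMat s) = -(1 - γ • (polMat π * F)) := by
  rw [Matrix.mul_sub, polMat_mul_projMat hπ, Matrix.mul_smul, neg_sub]

section Orbit

variable {s : Fin m → Fin n} {γ : ℝ} {F : Matrix (Fin m) (Fin n) ℝ}
  (hF : RowStochastic F) (hγ0 : 0 ≤ γ) (hγ1 : γ < 1)
include hF hγ0 hγ1

theorem valueVec_add_mulVec {π : Fin n → Fin m} (hπ : IsPolicy s π) (R : Fin m → ℝ)
    (Δ : Fin n → ℝ) :
    valueVec γ F π (R + (γ • F - projMat s) *ᵥ Δ) = valueVec γ F π R - Δ := by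
  set A := 1 - γ • (polMat π * F)
  have hA : IsUnit A.det := ((hF.polMat_mul π).det_one_sub_smul_ne_zero hγ0 hγ1).isUnit
  have hshift : polMat π *ᵥ ((γ • F - projMat s) *ᵥ Δ) = -(A *ᵥ Δ) := by
    rw [mulVec_mulVec, polMat_mul_sub_projMat hπ, neg_mulVec]
  rw [valueVec, valueVec, mulVec_add, hshift, mulVec_add, mulVec_neg, mulVec_mulVec Δ,
    nonsing_inv_mul _ hA, one_mulVec, ← sub_eq_add_neg]

theorem injective_mulVec_sub_projMat {π : Fin n → Fin m} (hπ : IsPolicy s π) :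
    Function.Injective (γ • F - projMat s).mulVec := by
  intro x y hxy
  have h := congrArg (polMat π *ᵥ ·) hxy
  simp only [mulVec_mulVec, polMat_mul_sub_projMat hπ, neg_mulVec, neg_inj] at h
  exact mulVec_injective_of_det_ne_zero
    ((hF.polMat_mul π).det_one_sub_smul_ne_zero hγ0 hγ1) h

theorem eq_valueVec_of_isNormal {R : Fin m → ℝ} {πs : Fin n → Fin m}
    (hπs : IsOptimal s γ F R πs) {Δ : Fin n → ℝ}
    (hnormal : IsNormal s γ F (R + (γ • F - projMat s) *ᵥ Δ)) :
    Δ = valueVec γ F πs R := by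
  obtain ⟨π, ⟨hπ, hopt⟩, hzero⟩ := hnormal
  rw [valueVec_add_mulVec hF hγ0 hγ1 hπ, sub_eq_zero] at hzero
  funext i
  have h := hopt πs hπs.1 i
  rw [valueVec_add_mulVec hF hγ0 hγ1 hπ, valueVec_add_mulVec hF hγ0 hγ1 hπs.1] at h
  have h' := hπs.2 π hπ i
  simp only [Pi.sub_apply, ← hzero] at h h' ⊢
  linarith

end Orbit

theorem normalizing_control_characterization_general {n m : ℕ} (s : Fin m → Fin n)
    (γ : ℝ) (hγ0 : 0 ≤ γ) (hγ1 : γ < 1)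
    (F : Matrix (Fin m) (Fin n) ℝ) (hF : RowStochastic F)
    (R0 : Fin m → ℝ) (πs : Fin n → Fin m) (hπs : IsOptimal s γ F R0 πs)
    (Δ : ℕ → Fin n → ℝ) (Rseq : ℕ → Fin m → ℝ)
    (hinit : Rseq 0 = R0)
    (hstep : ∀ t, Rseq (t + 1) = Rseq t + (γ • F - projMat s) *ᵥ Δ t)
    (Rbar : Fin m → ℝ)
    (horbit : ∃ Δ' : Fin n → ℝ, Rbar = R0 + (γ • F - projMat s) *ᵥ Δ')
    (hnormal : IsNormal s γ F Rbar) :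
    (∀ t, Rseq (t + 1) - Rbar =
        -((γ • F - projMat s) *ᵥ
          (valueVec γ F πs R0 - ∑ τ ∈ Finset.range (t + 1), Δ τ))) ∧
      (Tendsto Rseq atTop (𝓝 Rbar) ↔
        Tendsto (fun t => ∑ τ ∈ Finset.range (t + 1), Δ τ) atTop
          (𝓝 (valueVec γ F πs R0))) := by
  obtain ⟨Δ', rfl⟩ := horbit
  obtain rfl := eq_valueVec_of_isNormal hF hγ0 hγ1 hπs hnormal
  have hclosed (t : ℕ) := hinit ▸ eq_add_mulVec_sum_range _ hstep (t + 1)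
  refine ⟨fun t => by rw [hclosed, mulVec_sub]; abel, ?_⟩
  rw [← tendsto_add_atTop_iff_nat 1, funext hclosed]
  exact tendsto_const_add_mulVec_iff (injective_mulVec_sub_projMat hF hγ0 hγ1 hπs.1) R0

/-- Error coordinates: `R_{t+1} − R̄ = −B(V*_{R₀} − ∑_{τ≤t} Δ_τ)`, where `R̄`
is the unique normal reward in the ℓ-orbit of `R₀`; consequently `R_t → R̄` iff the partial
sums of the inputs converge to `V*_{R₀}`. -/
theorem normalizing_control_characterization {n m : ℕ} (hn : 1 ≤ n) (hm : 1 ≤ m)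
    (s : Fin m → Fin n) (hs : Function.Surjective s)
    (γ : ℝ) (hγ0 : 0 ≤ γ) (hγ1 : γ < 1)
    (F : Matrix (Fin m) (Fin n) ℝ) (hF : RowStochastic F)
    (R0 : Fin m → ℝ) (πs : Fin n → Fin m) (hπs : IsOptimal s γ F R0 πs)
    (Δ : ℕ → Fin n → ℝ) (Rseq : ℕ → Fin m → ℝ)
    (hinit : Rseq 0 = R0)
    (hstep : ∀ t, Rseq (t + 1) = Rseq t + (γ • F - projMat s) *ᵥ Δ t)
    (Rbar : Fin m → ℝ)
    (horbit : ∃ Δ' : Fin n → ℝ, Rbar = R0 + (γ • F - projMat s) *ᵥ Δ')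
    (hnormal : IsNormal s γ F Rbar) :
    (∀ t, Rseq (t + 1) - Rbar =
        -((γ • F - projMat s) *ᵥ
          (valueVec γ F πs R0 - ∑ τ ∈ Finset.range (t + 1), Δ τ))) ∧
      (Tendsto Rseq atTop (𝓝 Rbar) ↔
        Tendsto (fun t => ∑ τ ∈ Finset.range (t + 1), Δ τ) atTop
          (𝓝 (valueVec γ F πs R0))) :=
  normalizing_control_characterization_general s γ hγ0 hγ1 F hF R0 πs hπs Δ Rseq hinit hstep Rbar
    horbit hnormal
end
end

section
/- Let α ∈ [0,1) and let h : ℝ^m → ℝ^n satisfy the robust-normalization conditions with constant α. Then for every sequence (F̂_t)_{t∈ℕ} of row-stochastic matrices in ℝ^{m×n} and every initial reward R̂_0 ≤ 0, the iteration R̂_{t+1} := R̂_t + (γF̂_t − S) h(R̂_t) satisfies ‖h(R̂_t)‖_∞ ≤ (α^t/(1 − γ)) ‖h_max(R̂_0)‖_∞ for every t ∈ ℕ; in particular the input sequence decays geometrically. -/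
open Matrix MeasureTheory Filter Topology

noncomputable section

/-- The model-invariant admissible set `I(R)`. -/
def Iset {n m : ℕ} (s : Fin m → Fin n) (γ : ℝ) (R : Fin m → ℝ) : Set (Fin n → ℝ) :=
  {Δ | Δ ≤ 0 ∧ ∀ i k : Fin n, ∀ j : Fin m, s j = i → γ * Δ k + R j ≤ Δ i}

/-- The robust-normalization conditions with constant `α`:
(i) `h(R) ∈ I(R)` and (ii) `h(R)^i + γ‖h(R)‖_∞ ≤ h_max(R)^i + α‖h_max(R)‖_∞`. -/
def RobustNormalizing {n m : ℕ} (s : Fin m → Fin n) (γ α : ℝ)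
    (h : (Fin m → ℝ) → (Fin n → ℝ)) : Prop :=
  ∀ R : Fin m → ℝ, R ≤ 0 →
    h R ∈ Iset s γ R ∧ ∀ i, h R i + γ * ‖h R‖ ≤ hmax s R i + α * ‖hmax s R‖

/-!
Let `Δ = h(R)` and `R' = R + (γF − S)Δ`, so `R'_j = R_j + γ(FΔ)_j − Δ_{s j}`.
Averaging the inequalities `γΔ_k + R_j ≤ Δ_{s j}` of `I(R)` against the row `F_j` gives `R' ≤ 0`.
At an action `j` maximising `R` over `U_i`, `(FΔ)_j ≥ −‖Δ‖` and condition (ii) give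
`R'_j ≥ −α‖h_max(R)‖`, so `‖h_max(R')‖ ≤ α‖h_max(R)‖`, and by induction
`‖h_max(R̂_t)‖ ≤ αᵗ‖h_max(R̂_0)‖`. Finally the diagonal inequality `γΔ_i + h_max(R)_i ≤ Δ_i`
of `I(R)` gives `‖Δ‖ ≤ ‖h_max(R)‖ / (1 − γ)`.
-/

lemma pi_norm_le_of_nonpos {ι : Type*} [Fintype ι] {v : ι → ℝ} (hv : v ≤ 0) {c : ℝ}
    (hc : 0 ≤ c) (hlb : ∀ i, -c ≤ v i) : ‖v‖ ≤ c :=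
  (pi_norm_le_iff_of_nonneg hc).2 fun i => abs_le.2 ⟨hlb i, (hv i).trans hc⟩

lemma neg_pi_norm_le_apply {ι : Type*} [Fintype ι] (v : ι → ℝ) (i : ι) : -‖v‖ ≤ v i :=
  (neg_le_neg (norm_le_pi_norm v i)).trans (neg_abs_le (v i))

lemma projMat_mulVec {n m : ℕ} (s : Fin m → Fin n) (v : Fin n → ℝ) :
    projMat s *ᵥ v = v ∘ s := by
  ext j
  simp [projMat, mulVec, dotProduct]

namespace RowStochastic

variable {n m : ℕ} {F : Matrix (Fin m) (Fin n) ℝ}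

lemma mulVec_const (hF : RowStochastic F) (c : ℝ) : F *ᵥ (fun _ => c) = fun _ => c := by
  ext j
  simp [mulVec, dotProduct, ← Finset.sum_mul, hF.2 j]

lemma mulVec_le_of_le (hF : RowStochastic F) {v : Fin n → ℝ} {c : ℝ} (hv : ∀ i, v i ≤ c)
    (j : Fin m) : (F *ᵥ v) j ≤ c := by
  calc (F *ᵥ v) j ≤ (F *ᵥ fun _ => c) j :=
        show ∑ i, F j i * v i ≤ ∑ i, F j i * c from
          Finset.sum_le_sum fun i _ => mul_le_mul_of_nonneg_left (hv i) (hF.1 j i)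
    _ = c := by rw [hF.mulVec_const]

lemma le_mulVec_of_le (hF : RowStochastic F) {v : Fin n → ℝ} {c : ℝ} (hv : ∀ i, c ≤ v i)
    (j : Fin m) : c ≤ (F *ᵥ v) j := by
  calc c = (F *ᵥ fun _ => c) j := by rw [hF.mulVec_const]
    _ ≤ (F *ᵥ v) j :=
        show ∑ i, F j i * c ≤ ∑ i, F j i * v i from
          Finset.sum_le_sum fun i _ => mul_le_mul_of_nonneg_left (hv i) (hF.1 j i)

end RowStochastic

section hmax

variable {n m : ℕ} (s : Fin m → Fin n)

lemma hmax_set_finite (R : Fin m → ℝ) (i : Fin n) : {x | ∃ j, s j = i ∧ R j = x}.Finite :=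
  (Set.finite_range R).subset fun _ ⟨j, _, hx⟩ => ⟨j, hx⟩

lemma le_hmax (R : Fin m → ℝ) (j : Fin m) : R j ≤ hmax s R (s j) :=
  le_csSup (hmax_set_finite s R (s j)).bddAbove ⟨j, rfl, rfl⟩

variable {s}

lemma exists_eq_hmax (hs : Function.Surjective s) (R : Fin m → ℝ) (i : Fin n) :
    ∃ j, s j = i ∧ R j = hmax s R i :=
  have ⟨j, hj⟩ := hs i
  Set.Nonempty.csSup_mem (s := {x | ∃ j, s j = i ∧ R j = x}) ⟨R j, j, hj, rfl⟩
    (hmax_set_finite s R i)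

lemma hmax_nonpos (hs : Function.Surjective s) {R : Fin m → ℝ} (hR : R ≤ 0) :
    hmax s R ≤ 0 := fun i => by
  obtain ⟨j, rfl, hj⟩ := exists_eq_hmax hs R i
  exact hj ▸ hR j

end hmax

def rewardUpdate {n m : ℕ} (s : Fin m → Fin n) (γ : ℝ) (F : Matrix (Fin m) (Fin n) ℝ)
    (Δ : Fin n → ℝ) (R : Fin m → ℝ) : Fin m → ℝ :=
  R + (γ • F - projMat s) *ᵥ Δ

section rewardUpdate

variable {n m : ℕ} {s : Fin m → Fin n} {γ : ℝ} {F : Matrix (Fin m) (Fin n) ℝ}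
  {Δ : Fin n → ℝ} {R : Fin m → ℝ}

lemma rewardUpdate_apply (j : Fin m) :
    rewardUpdate s γ F Δ R j = R j + γ * (F *ᵥ Δ) j - Δ (s j) := by
  simp [rewardUpdate, sub_mulVec, smul_mulVec, projMat_mulVec, add_sub_assoc]

lemma rewardUpdate_nonpos (hF : RowStochastic F) (hΔ : Δ ∈ Iset s γ R) :
    rewardUpdate s γ F Δ R ≤ 0 := fun j => by
  have hrow : γ * (F *ᵥ Δ) j + R j ≤ Δ (s j) := by
    have := hF.mulVec_le_of_le (v := γ • Δ + fun _ => R j)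
      (fun k => hΔ.2 (s j) k j rfl) j
    rwa [mulVec_add, mulVec_smul, hF.mulVec_const] at this
  rw [rewardUpdate_apply]
  exact sub_nonpos.2 (by linarith)

lemma norm_hmax_rewardUpdate_le (hs : Function.Surjective s) (hγ0 : 0 ≤ γ)
    (hF : RowStochastic F) (hΔ : Δ ∈ Iset s γ R) {c : ℝ} (hc : 0 ≤ c)
    (hΔc : ∀ i, Δ i + γ * ‖Δ‖ ≤ hmax s R i + c) :
    ‖hmax s (rewardUpdate s γ F Δ R)‖ ≤ c := by
  refine pi_norm_le_of_nonpos (hmax_nonpos hs (rewardUpdate_nonpos hF hΔ)) hc fun i => ?_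
  obtain ⟨j, rfl, hj⟩ := exists_eq_hmax hs R i
  have hFΔ : γ * -‖Δ‖ ≤ γ * (F *ᵥ Δ) j :=
    mul_le_mul_of_nonneg_left (hF.le_mulVec_of_le (neg_pi_norm_le_apply Δ) j) hγ0
  calc -c ≤ rewardUpdate s γ F Δ R j := by
        rw [rewardUpdate_apply, hj]
        linarith [hΔc (s j)]
    _ ≤ hmax s (rewardUpdate s γ F Δ R) (s j) := le_hmax s _ j

lemma norm_le_norm_hmax_div_of_mem_Iset (hs : Function.Surjective s) (hγ1 : γ < 1)
    (hΔ : Δ ∈ Iset s γ R) : ‖Δ‖ ≤ ‖hmax s R‖ / (1 - γ) := by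
  have hγ : 0 < 1 - γ := sub_pos.2 hγ1
  refine pi_norm_le_of_nonpos hΔ.1 (by positivity) fun i => ?_
  obtain ⟨j, hj, hjmax⟩ := exists_eq_hmax hs R i
  have hdiag : γ * Δ i + hmax s R i ≤ Δ i := hjmax ▸ hΔ.2 i i j hj
  rw [neg_le, le_div_iff₀ hγ]
  linarith [neg_pi_norm_le_apply (hmax s R) i]

end rewardUpdate

lemma RobustNormalizing.rewardUpdate_nonpos_and_norm_hmax_le {n m : ℕ} {s : Fin m → Fin n}
    (hs : Function.Surjective s) {γ α : ℝ} (hγ0 : 0 ≤ γ) (hα0 : 0 ≤ α)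
    {h : (Fin m → ℝ) → (Fin n → ℝ)} (hrob : RobustNormalizing s γ α h)
    {F : Matrix (Fin m) (Fin n) ℝ} (hF : RowStochastic F) {R : Fin m → ℝ} (hR : R ≤ 0) :
    rewardUpdate s γ F (h R) R ≤ 0 ∧
      ‖hmax s (rewardUpdate s γ F (h R) R)‖ ≤ α * ‖hmax s R‖ :=
  have ⟨hI, hcond⟩ := hrob R hR
  ⟨rewardUpdate_nonpos hF hI, norm_hmax_rewardUpdate_le hs hγ0 hF hI (by positivity) hcond⟩

theorem robust_input_geometric_decay_general {n m : ℕ}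
    (s : Fin m → Fin n) (hs : Function.Surjective s)
    (γ : ℝ) (hγ0 : 0 ≤ γ) (hγ1 : γ < 1)
    (α : ℝ) (hα0 : 0 ≤ α)
    (h : (Fin m → ℝ) → (Fin n → ℝ)) (hrob : RobustNormalizing s γ α h)
    (Fhat : ℕ → Matrix (Fin m) (Fin n) ℝ) (hFhat : ∀ t, RowStochastic (Fhat t))
    (Rhat : ℕ → Fin m → ℝ) (hR0 : Rhat 0 ≤ 0)
    (hstep : ∀ t, Rhat (t + 1) = Rhat t + (γ • Fhat t - projMat s) *ᵥ h (Rhat t)) :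
    ∀ t, ‖h (Rhat t)‖ ≤ α ^ t / (1 - γ) * ‖hmax s (Rhat 0)‖ := by
  have hdecay : ∀ t, Rhat t ≤ 0 ∧ ‖hmax s (Rhat t)‖ ≤ α ^ t * ‖hmax s (Rhat 0)‖ := by
    intro t
    induction t with
    | zero => simpa using hR0
    | succ t ih =>
      obtain ⟨hnonpos, hnorm⟩ :=
        hrob.rewardUpdate_nonpos_and_norm_hmax_le hs hγ0 hα0 (hFhat t) ih.1
      have hupdate : Rhat (t + 1) = rewardUpdate s γ (Fhat t) (h (Rhat t)) (Rhat t) := hstep t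
      rw [← hupdate] at hnonpos hnorm
      refine ⟨hnonpos, hnorm.trans ?_⟩
      rw [pow_succ', mul_assoc]
      exact mul_le_mul_of_nonneg_left ih.2 hα0
  intro t
  calc ‖h (Rhat t)‖ ≤ ‖hmax s (Rhat t)‖ / (1 - γ) :=
        norm_le_norm_hmax_div_of_mem_Iset hs hγ1 (hrob _ (hdecay t).1).1
    _ ≤ α ^ t / (1 - γ) * ‖hmax s (Rhat 0)‖ := by
        rw [div_mul_eq_mul_div]
        exact div_le_div_of_nonneg_right (hdecay t).2 (sub_pos.2 hγ1).le

/-- Under the robust-normalization conditions, along the stochastic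
iteration `R̂_{t+1} = R̂_t + (γF̂_t − S)h(R̂_t)` the input decays geometrically:
`‖h(R̂_t)‖_∞ ≤ (α^t/(1−γ))‖h_max(R̂₀)‖_∞`. -/
theorem robust_input_geometric_decay {n m : ℕ} (hn : 1 ≤ n) (hm : 1 ≤ m)
    (s : Fin m → Fin n) (hs : Function.Surjective s)
    (γ : ℝ) (hγ0 : 0 ≤ γ) (hγ1 : γ < 1)
    (α : ℝ) (hα0 : 0 ≤ α) (hα1 : α < 1)
    (h : (Fin m → ℝ) → (Fin n → ℝ)) (hrob : RobustNormalizing s γ α h)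
    (Fhat : ℕ → Matrix (Fin m) (Fin n) ℝ) (hFhat : ∀ t, RowStochastic (Fhat t))
    (Rhat : ℕ → Fin m → ℝ) (hR0 : Rhat 0 ≤ 0)
    (hstep : ∀ t, Rhat (t + 1) = Rhat t + (γ • Fhat t - projMat s) *ᵥ h (Rhat t)) :
    ∀ t, ‖h (Rhat t)‖ ≤ α ^ t / (1 - γ) * ‖hmax s (Rhat 0)‖ :=
  robust_input_geometric_decay_general s hs γ hγ0 hγ1 α hα0 h hrob Fhat hFhat Rhat hR0 hstep
end
end
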